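/- If A is a Lie(G)-valued 1-form and Λ a Lie(H)-valued 1-form on an open set U such that A = g⁻¹ dg − t(Λ) for some smooth g : U → G, and B := −dΛ − A ▷ Λ − ½[Λ,Λ], then the connective structure (A,B) is flat, i.e. dA + ½[A,A] − t(B) = 0 and dB + A ▷ B = 0. -/

import Mathlib

noncomputable section

abbrev E (d : ℕ) := Fin d → ℝ
abbrev Mat (n : ℕ) := (Fin n → ℝ) →L[ℝ] (Fin n → ℝ)

/-- Pointwise exterior derivative of a 1-form. -/
def dOne {d n : ℕ} (A : E d → E d → Mat n) (x v w : E d) : Mat n :=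
  fderiv ℝ (fun y => A y w) x v - fderiv ℝ (fun y => A y v) x w

/-- Pointwise exterior derivative of a 2-form. -/
def dTwo {d n : ℕ} (B : E d → E d → E d → Mat n) (x u v w : E d) : Mat n :=
  fderiv ℝ (fun y => B y v w) x u - fderiv ℝ (fun y => B y u w) x v
    + fderiv ℝ (fun y => B y u v) x w

open Filter Topology

/-! Write `C = g⁻¹ dg`, so that `A = C - t Λ`. The Maurer–Cartan form is flat,
`dC + ½[C, C] = 0`, and expanding the fake curvature of `(A, B)` with the equivariance and the
Peiffer identity of `t` leaves exactly `dC + ½[C, C]`. For the 2-curvature, `d² = 0` and the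
Leibniz rule give `dB = Λ ▷ dA + (A + Λ) ▷ dΛ`. Substituting `dA = t B - ½[A, A]` (fake
flatness), `Λ ▷ t B = Λ ▷ B` (Peiffer) and the definition of `B`, the terms in `dΛ` cancel and
what remains vanishes by the Jacobi identity. -/

section Algebra

variable {V R : Type*} [Ring R]

/- At a point and with `▷ = ad`: `actOne a l = a ▷ l`, `halfBracket a = ½[a, a]` and
`actTwo a b = a ▷ b`, in the conventions `[a, a](v, w) = 2⁅a v, a w⁆` and
`(a ▷ l)(v, w) = ⁅a v, l w⁆ - ⁅a w, l v⁆`. -/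
def actOne (a l : V → R) (v w : V) : R := ⁅a v, l w⁆ - ⁅a w, l v⁆

def halfBracket (a : V → R) (v w : V) : R := ⁅a v, a w⁆

def actTwo (a : V → R) (b : V → V → R) (u v w : V) : R :=
  ⁅a u, b v w⁆ - ⁅a v, b u w⁆ + ⁅a w, b u v⁆

theorem fake_flat_of_shift {F : Type*} [FunLike F R R] [AddMonoidHomClass F R R] (t : F)
    (ht_equiv : ∀ a b : R, t ⁅a, b⁆ = ⁅a, t b⁆) (ht_peiffer : ∀ a b : R, ⁅t a, b⁆ = ⁅a, b⁆)
    {a c l : V → R} {da dc dl b : V → V → R} (ha : a = c - t ∘ l)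
    (hda : ∀ v w, da v w = dc v w - t (dl v w)) (hb : b = -dl - actOne a l - halfBracket l)
    (hflat : ∀ v w, dc v w + halfBracket c v w = 0) (v w : V) :
    da v w + halfBracket a v w - t (b v w) = 0 := by
  subst ha
  rw [← hflat v w, hda, hb]
  simp only [actOne, halfBracket, Pi.sub_apply, Pi.neg_apply, Function.comp_apply, map_sub,
    map_neg, ht_equiv]
  rw [← ht_peiffer (l v) (t (l w))]
  simp only [Ring.lie_def]
  noncomm_ring

theorem bianchi_of_fake_flat (t : R → R) (ht_peiffer : ∀ a b : R, ⁅t a, b⁆ = ⁅a, b⁆)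
    {a l : V → R} {da dl b : V → V → R} (hb : b = -dl - actOne a l - halfBracket l)
    (hfake : ∀ v w, da v w + halfBracket a v w - t (b v w) = 0) (u v w : V) :
    actTwo l da u v w + actTwo a dl u v w + actTwo l dl u v w + actTwo a b u v w = 0 := by
  have hda : ∀ v w, da v w = t (b v w) - halfBracket a v w := fun v w => by
    rw [← sub_eq_zero, ← hfake v w]; abel
  -- Peiffer, oriented so that `t X` only survives in products `c * t X`, which cancel.
  have hpeiffer : ∀ c X, t X * c = X * c - c * X + c * t X := fun c X => by
    have := ht_peiffer X c
    simp only [Ring.lie_def] at this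
    rw [← this]; abel
  simp only [actTwo, hda, hb, actOne, halfBracket, Pi.sub_apply, Pi.neg_apply, Ring.lie_def,
    mul_sub, sub_mul, hpeiffer]
  noncomm_ring

end Algebra

section Calculus

variable {𝕜 X R : Type*} [NontriviallyNormedField 𝕜] [NormedAddCommGroup X] [NormedSpace 𝕜 X]
  [NormedRing R] [NormedAlgebra 𝕜 R] {x : X}

theorem fderiv_apply_of_mul_eq_one {g g' : X → R} (hg : DifferentiableAt 𝕜 g x)
    (hg' : DifferentiableAt 𝕜 g' x) (hright : g x * g' x = 1)
    (hleft : ∀ᶠ y in 𝓝 x, g' y * g y = 1) (u : X) :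
    fderiv 𝕜 g' x u = -(g' x * fderiv 𝕜 g x u * g' x) := by
  have hprod : fderiv 𝕜 (fun y => g' y * g y) x u = 0 := by
    have hconst : (fun y => g' y * g y) =ᶠ[𝓝 x] fun _ => 1 := hleft
    rw [hconst.fderiv_eq]
    simp
  rw [fderiv_fun_mul' hg' hg] at hprod
  simp only [add_apply, smul_apply, smul_eq_mul, op_smul_eq_mul] at hprod
  calc fderiv 𝕜 g' x u = fderiv 𝕜 g' x u * (g x * g' x) := by rw [hright, mul_one]
    _ = -(g' x * fderiv 𝕜 g x u * g' x) := by
      rw [← mul_assoc, eq_neg_of_add_eq_zero_right hprod]; noncomm_ring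

theorem fderiv_fderiv_apply_const {F : Type*} [NormedAddCommGroup F] [NormedSpace 𝕜 F]
    {f : X → F} (hf : DifferentiableAt 𝕜 (fderiv 𝕜 f) x) (u v : X) :
    fderiv 𝕜 (fun y => fderiv 𝕜 f y v) x u = fderiv 𝕜 (fderiv 𝕜 f) x u v := by
  rw [fderiv_clm_apply hf (differentiableAt_const v)]
  simp

theorem DifferentiableAt.lie {f h : X → R} (hf : DifferentiableAt 𝕜 f x)
    (hh : DifferentiableAt 𝕜 h x) : DifferentiableAt 𝕜 (fun y => ⁅f y, h y⁆) x := by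
  simp only [Ring.lie_def]
  exact (hf.fun_mul hh).fun_sub (hh.fun_mul hf)

theorem fderiv_lie_apply {f h : X → R} (hf : DifferentiableAt 𝕜 f x)
    (hh : DifferentiableAt 𝕜 h x) (u : X) :
    fderiv 𝕜 (fun y => ⁅f y, h y⁆) x u = ⁅fderiv 𝕜 f x u, h x⁆ + ⁅f x, fderiv 𝕜 h x u⁆ := by
  simp only [Ring.lie_def]
  rw [fderiv_fun_sub (hf.fun_mul hh) (hh.fun_mul hf), sub_apply,
    fderiv_fun_mul' hf hh, fderiv_fun_mul' hh hf]
  simp only [add_apply, smul_apply, smul_eq_mul, op_smul_eq_mul]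
  abel

variable {V : Type*} {A Λ : X → V → R}

theorem differentiableAt_actOne (hA : ∀ v, DifferentiableAt 𝕜 (fun y => A y v) x)
    (hΛ : ∀ v, DifferentiableAt 𝕜 (fun y => Λ y v) x) (v w : V) :
    DifferentiableAt 𝕜 (fun y => actOne (A y) (Λ y) v w) x :=
  ((hA v).lie (hΛ w)).fun_sub ((hA w).lie (hΛ v))

theorem fderiv_actOne_apply (hA : ∀ v, DifferentiableAt 𝕜 (fun y => A y v) x)
    (hΛ : ∀ v, DifferentiableAt 𝕜 (fun y => Λ y v) x) (u : X) (v w : V) :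
    fderiv 𝕜 (fun y => actOne (A y) (Λ y) v w) x u =
      actOne (fun v => fderiv 𝕜 (fun y => A y v) x u) (Λ x) v w
        + actOne (A x) (fun v => fderiv 𝕜 (fun y => Λ y v) x u) v w := by
  simp only [actOne]
  rw [fderiv_fun_sub ((hA v).lie (hΛ w)) ((hA w).lie (hΛ v)), sub_apply,
    fderiv_lie_apply (hA v) (hΛ w), fderiv_lie_apply (hA w) (hΛ v)]
  abel

theorem differentiableAt_halfBracket (hΛ : ∀ v, DifferentiableAt 𝕜 (fun y => Λ y v) x)
    (v w : V) : DifferentiableAt 𝕜 (fun y => halfBracket (Λ y) v w) x :=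
  (hΛ v).lie (hΛ w)

theorem fderiv_halfBracket_apply (hΛ : ∀ v, DifferentiableAt 𝕜 (fun y => Λ y v) x)
    (u : X) (v w : V) :
    fderiv 𝕜 (fun y => halfBracket (Λ y) v w) x u =
      ⁅fderiv 𝕜 (fun y => Λ y v) x u, Λ x w⁆ + ⁅Λ x v, fderiv 𝕜 (fun y => Λ y w) x u⁆ :=
  fderiv_lie_apply (hΛ v) (hΛ w) u

end Calculus

section MaurerCartan

variable (𝕜 : Type*) {X R : Type*} [RCLike 𝕜] [NormedAddCommGroup X] [NormedSpace 𝕜 X]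
  [NormedRing R] [NormedAlgebra 𝕜 R]

def maurerCartan (g g' : X → R) (y v : X) : R := g' y * fderiv 𝕜 g y v

variable {𝕜} {g g' : X → R} {x : X}

theorem differentiableAt_maurerCartan (hg : ContDiffAt 𝕜 2 g x) (hg' : DifferentiableAt 𝕜 g' x)
    (v : X) : DifferentiableAt 𝕜 (fun y => maurerCartan 𝕜 g g' y v) x :=
  hg'.fun_mul (((hg.fderiv_right (m := 1) le_rfl).differentiableAt one_ne_zero).clm_apply
    (differentiableAt_const v))

theorem maurerCartan_flat (hg : ContDiffAt 𝕜 2 g x) (hg' : DifferentiableAt 𝕜 g' x)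
    (hright : g x * g' x = 1) (hleft : ∀ᶠ y in 𝓝 x, g' y * g y = 1) (v w : X) :
    fderiv 𝕜 (fun y => maurerCartan 𝕜 g g' y w) x v
      - fderiv 𝕜 (fun y => maurerCartan 𝕜 g g' y v) x w
      + halfBracket (maurerCartan 𝕜 g g' x) v w = 0 := by
  have hg1 : DifferentiableAt 𝕜 g x := hg.differentiableAt two_ne_zero
  have hg2 : DifferentiableAt 𝕜 (fderiv 𝕜 g) x :=
    (hg.fderiv_right (m := 1) le_rfl).differentiableAt one_ne_zero
  have hderiv : ∀ u v, fderiv 𝕜 (fun y => maurerCartan 𝕜 g g' y v) x u =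
      -(maurerCartan 𝕜 g g' x u * maurerCartan 𝕜 g g' x v)
        + g' x * fderiv 𝕜 (fderiv 𝕜 g) x u v := by
    intro u v
    simp only [maurerCartan]
    rw [fderiv_fun_mul' hg' (hg2.clm_apply (differentiableAt_const v))]
    simp only [add_apply, smul_apply, smul_eq_mul, op_smul_eq_mul, fderiv_fderiv_apply_const hg2,
      fderiv_apply_of_mul_eq_one hg1 hg' hright hleft]
    noncomm_ring
  have hsymm := hg.isSymmSndFDerivAt (by simp [minSmoothness_of_isRCLikeNormedField]) v w
  rw [hderiv, hderiv, hsymm]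
  simp only [halfBracket, Ring.lie_def]
  noncomm_ring

end MaurerCartan

section Forms

variable {d n : ℕ} {x : E d}

theorem dTwo_congr {B B' : E d → E d → E d → Mat n} (h : ∀ᶠ y in 𝓝 x, B y = B' y) :
    dTwo B x = dTwo B' x := by
  have hcomp : ∀ v w, fderiv ℝ (fun y => B y v w) x = fderiv ℝ (fun y => B' y v w) x :=
    fun v w => Filter.EventuallyEq.fderiv_eq (h.mono fun y hy => congrFun (congrFun hy v) w)
  funext u v w
  simp only [dTwo, hcomp]

theorem dTwo_neg (B : E d → E d → E d → Mat n) (u v w : E d) :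
    dTwo (fun y => -B y) x u v w = -dTwo B x u v w := by
  simp only [dTwo, Pi.neg_apply, fderiv_fun_neg, neg_apply]
  abel

theorem dTwo_sub {B₁ B₂ : E d → E d → E d → Mat n}
    (h₁ : ∀ v w, DifferentiableAt ℝ (fun y => B₁ y v w) x)
    (h₂ : ∀ v w, DifferentiableAt ℝ (fun y => B₂ y v w) x) (u v w : E d) :
    dTwo (fun y => B₁ y - B₂ y) x u v w = dTwo B₁ x u v w - dTwo B₂ x u v w := by
  simp only [dTwo, Pi.sub_apply, fderiv_fun_sub (h₁ _ _) (h₂ _ _), sub_apply]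
  abel

variable {A Λ : E d → E d → Mat n}

theorem fderiv_dOne_apply (hΛ : ∀ v, ContDiffAt ℝ 2 (fun y => Λ y v) x) (u v w : E d) :
    fderiv ℝ (fun y => dOne Λ y v w) x u =
      fderiv ℝ (fderiv ℝ fun y => Λ y w) x u v - fderiv ℝ (fderiv ℝ fun y => Λ y v) x u w := by
  have h2 : ∀ v, DifferentiableAt ℝ (fderiv ℝ fun y => Λ y v) x := fun v =>
    ((hΛ v).fderiv_right (m := 1) le_rfl).differentiableAt one_ne_zero
  simp only [dOne]
  rw [fderiv_fun_sub ((h2 w).clm_apply (differentiableAt_const v))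
    ((h2 v).clm_apply (differentiableAt_const w)), sub_apply, fderiv_fderiv_apply_const (h2 w),
    fderiv_fderiv_apply_const (h2 v)]

theorem differentiableAt_dOne (hΛ : ∀ v, ContDiffAt ℝ 2 (fun y => Λ y v) x) (v w : E d) :
    DifferentiableAt ℝ (fun y => dOne Λ y v w) x := by
  have h2 : ∀ v, DifferentiableAt ℝ (fderiv ℝ fun y => Λ y v) x := fun v =>
    ((hΛ v).fderiv_right (m := 1) le_rfl).differentiableAt one_ne_zero
  exact ((h2 w).clm_apply (differentiableAt_const v)).fun_sub
    ((h2 v).clm_apply (differentiableAt_const w))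

theorem dTwo_dOne (hΛ : ∀ v, ContDiffAt ℝ 2 (fun y => Λ y v) x) (u v w : E d) :
    dTwo (dOne Λ) x u v w = 0 := by
  have hsymm : ∀ c a b, fderiv ℝ (fderiv ℝ fun y => Λ y c) x a b =
      fderiv ℝ (fderiv ℝ fun y => Λ y c) x b a := fun c =>
    (hΛ c).isSymmSndFDerivAt (by simp [minSmoothness_of_isRCLikeNormedField])
  simp only [dTwo, fderiv_dOne_apply hΛ, hsymm w u v, hsymm v u w, hsymm u v w]
  abel

theorem dTwo_actOne (hA : ∀ v, DifferentiableAt ℝ (fun y => A y v) x)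
    (hΛ : ∀ v, DifferentiableAt ℝ (fun y => Λ y v) x) (u v w : E d) :
    dTwo (fun y => actOne (A y) (Λ y)) x u v w =
      -actTwo (Λ x) (dOne A x) u v w - actTwo (A x) (dOne Λ x) u v w := by
  simp only [dTwo]
  rw [fderiv_actOne_apply hA hΛ, fderiv_actOne_apply hA hΛ, fderiv_actOne_apply hA hΛ]
  simp only [actOne, actTwo, dOne, Ring.lie_def, mul_sub, sub_mul]
  abel

theorem dTwo_halfBracket (hΛ : ∀ v, DifferentiableAt ℝ (fun y => Λ y v) x) (u v w : E d) :
    dTwo (fun y => halfBracket (Λ y)) x u v w = -actTwo (Λ x) (dOne Λ x) u v w := by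
  simp only [dTwo, fderiv_halfBracket_apply hΛ, actTwo, dOne, Ring.lie_def, mul_sub, sub_mul]
  abel

end Forms

section Flatness

variable {d n : ℕ} {x : E d} {A Λ : E d → E d → Mat n}

theorem hasFDerivAt_of_eventuallyEq_sub_map {C : E d → E d → Mat n} (t : Mat n →ₗ[ℝ] Mat n)
    (hA : ∀ᶠ y in 𝓝 x, A y = C y - t ∘ Λ y) (hC : ∀ v, DifferentiableAt ℝ (fun y => C y v) x)
    (hΛ : ∀ v, DifferentiableAt ℝ (fun y => Λ y v) x) (w : E d) :
    HasFDerivAt (fun y => A y w) (fderiv ℝ (fun y => C y w) x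
      - (LinearMap.toContinuousLinearMap t).comp (fderiv ℝ (fun y => Λ y w) x)) x := by
  have h := (hC w).hasFDerivAt.sub
    ((LinearMap.toContinuousLinearMap t).hasFDerivAt.comp x (hΛ w).hasFDerivAt)
  exact h.congr_of_eventuallyEq (hA.mono fun y hy => congrFun hy w)

theorem fake_flat_of_eventuallyEq_sub_map {C : E d → E d → Mat n} {B : E d → E d → E d → Mat n}
    (t : Mat n →ₗ[ℝ] Mat n) (ht_equiv : ∀ a b : Mat n, t ⁅a, b⁆ = ⁅a, t b⁆)
    (ht_peiffer : ∀ a b : Mat n, ⁅t a, b⁆ = ⁅a, b⁆)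
    (hA : ∀ᶠ y in 𝓝 x, A y = C y - t ∘ Λ y) (hC : ∀ v, DifferentiableAt ℝ (fun y => C y v) x)
    (hflat : ∀ v w, dOne C x v w + halfBracket (C x) v w = 0)
    (hΛ : ∀ v, DifferentiableAt ℝ (fun y => Λ y v) x)
    (hB : B x = -dOne Λ x - actOne (A x) (Λ x) - halfBracket (Λ x)) (v w : E d) :
    dOne A x v w + halfBracket (A x) v w - t (B x v w) = 0 := by
  have hdA : ∀ v w, dOne A x v w = dOne C x v w - t (dOne Λ x v w) := fun v w => by
    simp only [dOne, (hasFDerivAt_of_eventuallyEq_sub_map t hA hC hΛ _).fderiv, sub_apply,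
      ContinuousLinearMap.comp_apply, LinearMap.coe_toContinuousLinearMap', map_sub]
    abel
  exact fake_flat_of_shift t ht_equiv ht_peiffer hA.self_of_nhds hdA hB hflat v w

theorem dTwo_add_actTwo_eq_zero {B : E d → E d → E d → Mat n} (t : Mat n → Mat n)
    (ht_peiffer : ∀ a b : Mat n, ⁅t a, b⁆ = ⁅a, b⁆)
    (hA : ∀ v, DifferentiableAt ℝ (fun y => A y v) x)
    (hΛ : ∀ v, ContDiffAt ℝ 2 (fun y => Λ y v) x)
    (hB : ∀ᶠ y in 𝓝 x, B y = -dOne Λ y - actOne (A y) (Λ y) - halfBracket (Λ y))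
    (hfake : ∀ v w, dOne A x v w + halfBracket (A x) v w - t (B x v w) = 0) (u v w : E d) :
    dTwo B x u v w + actTwo (A x) (B x) u v w = 0 := by
  have hΛ1 : ∀ v, DifferentiableAt ℝ (fun y => Λ y v) x := fun v =>
    (hΛ v).differentiableAt two_ne_zero
  have hdB : dTwo B x u v w = actTwo (Λ x) (dOne A x) u v w + actTwo (A x) (dOne Λ x) u v w
      + actTwo (Λ x) (dOne Λ x) u v w := by
    have hdΛ := differentiableAt_dOne hΛ
    have hact := differentiableAt_actOne hA hΛ1
    rw [dTwo_congr hB, dTwo_sub (B₁ := fun y => -dOne Λ y - actOne (A y) (Λ y))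
      (fun v w => (hdΛ v w).fun_neg.fun_sub (hact v w)) (differentiableAt_halfBracket hΛ1),
      dTwo_sub (B₁ := fun y => -dOne Λ y) (fun v w => (hdΛ v w).fun_neg) hact, dTwo_neg,
      dTwo_dOne hΛ, dTwo_actOne hA hΛ1, dTwo_halfBracket hΛ1]
    abel
  rw [hdB]
  exact bianchi_of_fake_flat t ht_peiffer hB.self_of_nhds hfake u v w

theorem pure_gauge_flat_at {B : E d → E d → E d → Mat n} {g g' : E d → Mat n}
    (t : Mat n →ₗ[ℝ] Mat n)
    (ht_equiv : ∀ a b : Mat n, t ⁅a, b⁆ = ⁅a, t b⁆) (ht_peiffer : ∀ a b : Mat n, ⁅t a, b⁆ = ⁅a, b⁆)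
    (hg : ContDiffAt ℝ 2 g x) (hg' : DifferentiableAt ℝ g' x) (hright : g x * g' x = 1)
    (hleft : ∀ᶠ y in 𝓝 x, g' y * g y = 1) (hΛ : ∀ v, ContDiffAt ℝ 2 (fun y => Λ y v) x)
    (hA : ∀ᶠ y in 𝓝 x, A y = maurerCartan ℝ g g' y - t ∘ Λ y)
    (hB : ∀ᶠ y in 𝓝 x, B y = -dOne Λ y - actOne (A y) (Λ y) - halfBracket (Λ y)) :
    (∀ v w, dOne A x v w + halfBracket (A x) v w - t (B x v w) = 0) ∧
      ∀ u v w, dTwo B x u v w + actTwo (A x) (B x) u v w = 0 := by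
  have hΛ1 : ∀ v, DifferentiableAt ℝ (fun y => Λ y v) x := fun v =>
    (hΛ v).differentiableAt two_ne_zero
  have hC := differentiableAt_maurerCartan hg hg'
  have hfake := fake_flat_of_eventuallyEq_sub_map t ht_equiv ht_peiffer hA hC
    (maurerCartan_flat hg hg' hright hleft) hΛ1 hB.self_of_nhds
  have hA1 : ∀ v, DifferentiableAt ℝ (fun y => A y v) x := fun v =>
    (hasFDerivAt_of_eventuallyEq_sub_map t hA hC hΛ1 v).differentiableAt
  exact ⟨hfake, dTwo_add_actTwo_eq_zero t ht_peiffer hA1 hΛ hB hfake⟩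

end Flatness

/-- if `A = g⁻¹ dg - t(Λ)` and `B = -dΛ - A ▷ Λ - ½[Λ,Λ]`, then the
connective structure `(A,B)` is flat: `dA + ½[A,A] - t(B) = 0` and `dB + A ▷ B = 0`
(matrix model: `▷ = ad`). -/
theorem pure_gauge_implies_flat
    {d n : ℕ} (U : Set (E d)) (hU : IsOpen U)
    (t : Mat n →ₗ[ℝ] Mat n)
    (ht_equiv : ∀ a b : Mat n, t (a * b - b * a) = a * t b - t b * a)
    (ht_peiffer : ∀ a b : Mat n, t a * b - b * t a = a * b - b * a)
    (A Λ : E d → E d → Mat n) (B : E d → E d → E d → Mat n)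
    (g g' : E d → Mat n)
    (hg_inv : ∀ x ∈ U, g x * g' x = 1 ∧ g' x * g x = 1)
    (hg_sm : ContDiffOn ℝ 2 g U) (hg'_sm : ContDiffOn ℝ 2 g' U)
    (hΛ_sm : ∀ v, ContDiffOn ℝ 2 (fun x => Λ x v) U)
    -- `A = g⁻¹ dg - t(Λ)`:
    (hA : ∀ x ∈ U, ∀ v, A x v = g' x * fderiv ℝ g x v - t (Λ x v))
    -- `B = -dΛ - A ▷ Λ - ½[Λ,Λ]`:
    (hB : ∀ x ∈ U, ∀ v w, B x v w =
      -(fderiv ℝ (fun y => Λ y w) x v - fderiv ℝ (fun y => Λ y v) x w)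
      - ((A x v * Λ x w - Λ x w * A x v) - (A x w * Λ x v - Λ x v * A x w))
      - (Λ x v * Λ x w - Λ x w * Λ x v)) :
    (∀ x ∈ U, ∀ v w,
      dOne A x v w + (A x v * A x w - A x w * A x v) - t (B x v w) = 0) ∧
    (∀ x ∈ U, ∀ u v w,
      dTwo B x u v w
        + (A x u * B x v w - B x v w * A x u)
        - (A x v * B x u w - B x u w * A x v)
        + (A x w * B x u v - B x u v * A x w) = 0) := by
  have hflat : ∀ x ∈ U, _ := fun x hx => by
    have hUx : U ∈ 𝓝 x := hU.mem_nhds hx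
    exact pure_gauge_flat_at t ht_equiv ht_peiffer (hg_sm.contDiffAt hUx)
      ((hg'_sm.contDiffAt hUx).differentiableAt two_ne_zero) (hg_inv x hx).1
      (eventually_of_mem hUx fun y hy => (hg_inv y hy).2) (fun v => (hΛ_sm v).contDiffAt hUx)
      (eventually_of_mem hUx fun y hy => funext (hA y hy))
      (eventually_of_mem hUx fun y hy => funext fun v => funext (hB y hy v))
  refine ⟨fun x hx => (hflat x hx).1, fun x hx u v w => ?_⟩
  rw [add_sub_assoc, add_assoc]
  exact (hflat x hx).2 u v w

end
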